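/- For every nonzero ξ ∈ ℝ³ and each j ∈ {1,2,3}, if ξ is parallel to the j-th standard basis vector e_j (i.e. ξ = c·e_j with c ≠ 0 real), then π⁺(ξ) A_j π⁺(ξ) = sign(c)·π⁺(ξ), while for k ≠ j one has π⁺(ξ) A_k π⁺(ξ) = 0. -/

import Mathlib

open Matrix

noncomputable def A1 : Matrix (Fin 2) (Fin 2) ℂ := !![1, 0; 0, -1]
noncomputable def A2 : Matrix (Fin 2) (Fin 2) ℂ := !![0, 1; 1, 0]
noncomputable def A3 : Matrix (Fin 2) (Fin 2) ℂ := !![0, Complex.I; -Complex.I, 0]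
noncomputable def PA : Fin 3 → Matrix (Fin 2) (Fin 2) ℂ := ![A1, A2, A3]

noncomputable def Amat (ξ : Fin 3 → ℂ) : Matrix (Fin 2) (Fin 2) ℂ :=
  ξ 0 • A1 + ξ 1 • A2 + ξ 2 • A3

/-!
For `ξ = c eⱼ` one has `|ξ| = |c|` and `A(ξ) = c Aⱼ`, so `π⁺(ξ) = (2|c|)⁻¹ (c Aⱼ + |c|)`.
Since `Aⱼ² = 1` and `Aₖ` anticommutes with `Aⱼ` for `k ≠ j`, both sandwiches collapse, using only
`|c|² = c²`, to scalar multiples of `π⁺(ξ)`: the factor is `c / |c| = sign c` for `Aⱼ`, and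
`|c|² - c² = 0` for `Aₖ`.
-/

section Sandwich

variable {K R : Type*} [Field K] [CharZero K] [Ring R] [Algebra K R]

theorem sandwich_smul_of_mul_self_eq_one {A : R} (hA : A * A = 1) {c n : K} (hn : n * n = c * c) :
    ((2 * n)⁻¹ • (c • A + n • 1)) * A * ((2 * n)⁻¹ • (c • A + n • 1)) =
      (c / n) • ((2 * n)⁻¹ • (c • A + n • 1)) := by
  simp only [smul_mul_assoc, mul_smul_comm, mul_add, add_mul, smul_add, smul_smul,
    mul_one, one_mul, mul_assoc, hA]
  match_scalars
  · linear_combination (n⁻¹ ^ 2 / 4) * hn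
  · ring

theorem sandwich_eq_zero_of_anticomm {A B : R} (hA : A * A = 1) (hAB : A * B = -(B * A))
    {c n : K} (hn : n * n = c * c) :
    ((2 * n)⁻¹ • (c • A + n • 1)) * B * ((2 * n)⁻¹ • (c • A + n • 1)) = 0 := by
  simp only [smul_mul_assoc, mul_smul_comm, mul_add, add_mul, smul_add, smul_smul,
    mul_one, one_mul, mul_assoc, hAB, neg_mul, smul_neg, hA]
  match_scalars
  · linear_combination (n⁻¹ ^ 2 / 4) * hn
  · ring

end Sandwich

theorem Real.div_abs_eq_sign (c : ℝ) : c / |c| = Real.sign c := by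
  rcases lt_trichotomy c 0 with h | rfl | h
  · rw [abs_of_neg h, Real.sign_of_neg h, div_neg, div_self h.ne]
  · simp
  · rw [abs_of_pos h, Real.sign_of_pos h, div_self h.ne']

theorem PA_mul_self (i : Fin 3) : PA i * PA i = 1 := by
  fin_cases i <;> simp [PA, A1, A2, A3, Matrix.one_fin_two]

theorem PA_anticomm {i k : Fin 3} (hik : i ≠ k) : PA i * PA k = -(PA k * PA i) := by
  fin_cases i <;> fin_cases k <;> simp at hik <;> simp [PA, A1, A2, A3]

theorem Amat_ofReal_single (j : Fin 3) (c : ℝ) :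
    Amat (fun i => ((Pi.single j c : Fin 3 → ℝ) i : ℂ)) = (c : ℂ) • PA j := by
  fin_cases j <;> simp [Amat, PA]

theorem sqrt_sum_sq_single (j : Fin 3) (c : ℝ) :
    Real.sqrt ((Pi.single j c : Fin 3 → ℝ) 0 ^ 2 + (Pi.single j c : Fin 3 → ℝ) 1 ^ 2 +
      (Pi.single j c : Fin 3 → ℝ) 2 ^ 2) = |c| := by
  fin_cases j <;> simp [Real.sqrt_sq_eq_abs]

theorem pauli_sandwich_basis_general (j : Fin 3) (c : ℝ) :
    ∀ ξ : Fin 3 → ℝ, ξ = Pi.single j c →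
    ∀ n : ℝ, n = Real.sqrt (ξ 0 ^ 2 + ξ 1 ^ 2 + ξ 2 ^ 2) →
    ∀ πp : Matrix (Fin 2) (Fin 2) ℂ,
      πp = (2 * (n : ℂ))⁻¹ • (Amat (fun i => (ξ i : ℂ)) + (n : ℂ) • 1) →
      (πp * PA j * πp = ((Real.sign c : ℝ) : ℂ) • πp ∧
       ∀ k : Fin 3, k ≠ j → πp * PA k * πp = 0) := by
  rintro ξ rfl n rfl πp rfl
  rw [sqrt_sum_sq_single, Amat_ofReal_single]
  have hn : ((|c| : ℝ) : ℂ) * (|c| : ℝ) = c * c := by exact_mod_cast abs_mul_abs_self c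
  refine ⟨?_, fun k hk => sandwich_eq_zero_of_anticomm (PA_mul_self j) (PA_anticomm hk.symm) hn⟩
  rw [← Real.div_abs_eq_sign, Complex.ofReal_div]
  exact sandwich_smul_of_mul_self_eq_one (PA_mul_self j) hn

/-- If `ξ = c eⱼ` with `c ≠ 0` real, then `π⁺(ξ) Aⱼ π⁺(ξ) = sign(c) π⁺(ξ)` and
`π⁺(ξ) Aₖ π⁺(ξ) = 0` for `k ≠ j`. -/
theorem pauli_sandwich_basis (j : Fin 3) (c : ℝ) (hc : c ≠ 0) :
    ∀ ξ : Fin 3 → ℝ, ξ = Pi.single j c →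
    ∀ n : ℝ, n = Real.sqrt (ξ 0 ^ 2 + ξ 1 ^ 2 + ξ 2 ^ 2) →
    ∀ πp : Matrix (Fin 2) (Fin 2) ℂ,
      πp = (2 * (n : ℂ))⁻¹ • (Amat (fun i => (ξ i : ℂ)) + (n : ℂ) • 1) →
      (πp * PA j * πp = ((Real.sign c : ℝ) : ℂ) • πp ∧
       ∀ k : Fin 3, k ≠ j → πp * PA k * πp = 0) :=
  pauli_sandwich_basis_general j c
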